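/- Let S be a Boolean inverse ∧-monoid. (1) If s ∈ S satisfies s⁻¹s = ss⁻¹ = e, then g = s ∨ ē is a unit of S, where ē is the complement of e in the Boolean algebra E(S). (2) For a ∈ S, a² = 0 if, and only if, a⁻¹a ⊥ aa⁻¹, if and only if a ⊥ a⁻¹. (3) If a² = 0 and a ≠ 0, and e is the complement of a⁻¹a ∨ aa⁻¹ in E(S), then u = a⁻¹ ∨ a ∨ e is a non-trivial involution (u² = 1, u ≠ 1) with a ≤ u. -/

import Mathlib

universe u

/-- An inverse monoid with zero: every element `a` has a unique generalized
inverse `a⁻¹`, and `0` is an absorbing element. -/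
class InverseMonoidWithZero (S : Type u) extends Monoid S, Zero S, Inv S where
  zero_mul' : ∀ a : S, 0 * a = 0
  mul_zero' : ∀ a : S, a * 0 = 0
  mul_inv_mul : ∀ a : S, a * a⁻¹ * a = a
  inv_mul_inv : ∀ a : S, a⁻¹ * a * a⁻¹ = a⁻¹
  inv_unique : ∀ a b : S, a * b * a = a → b * a * b = b → b = a⁻¹

section BasicDefs

variable {S : Type u}

/-- The natural partial order: `a ≤ b` iff `a = e * b` for some idempotent `e`. -/
def nle [InverseMonoidWithZero S] (a b : S) : Prop :=
  ∃ e : S, e * e = e ∧ a = e * b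

/-- `a` and `b` are compatible if `a * b⁻¹` and `a⁻¹ * b` are idempotents. -/
def Compat [InverseMonoidWithZero S] (a b : S) : Prop :=
  (a * b⁻¹) * (a * b⁻¹) = a * b⁻¹ ∧ (a⁻¹ * b) * (a⁻¹ * b) = a⁻¹ * b

/-- `a` and `b` are orthogonal if `a * b⁻¹ = 0` and `a⁻¹ * b = 0`. -/
def Orth [InverseMonoidWithZero S] (a b : S) : Prop :=
  a * b⁻¹ = 0 ∧ a⁻¹ * b = 0

end BasicDefs

/-- A distributive inverse monoid: every compatible pair has a join (for the
natural partial order), recorded by `sup`, and multiplication distributes over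
these binary joins. -/
class DistributiveInverseMonoid (S : Type u) extends InverseMonoidWithZero S where
  sup : S → S → S
  le_sup_left : ∀ a b : S, Compat a b → nle a (sup a b)
  le_sup_right : ∀ a b : S, Compat a b → nle b (sup a b)
  sup_le : ∀ a b c : S, Compat a b → nle a c → nle b c → nle (sup a b) c
  mul_sup : ∀ a b c : S, Compat a b → c * sup a b = sup (c * a) (c * b)
  sup_mul : ∀ a b c : S, Compat a b → sup a b * c = sup (a * c) (b * c)

/-- A Boolean inverse monoid: a distributive inverse monoid whose idempotents
form a Boolean algebra under the natural partial order; `compl` records the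
complementation on idempotents. -/
class BooleanInverseMonoid (S : Type u) extends DistributiveInverseMonoid S where
  compl : S → S
  compl_idem : ∀ e : S, e * e = e → compl e * compl e = compl e
  mul_compl : ∀ e : S, e * e = e → e * compl e = 0
  sup_compl : ∀ e : S, e * e = e → sup e (compl e) = 1

/-- A Boolean inverse ∧-monoid: a Boolean inverse monoid in which every pair of
elements has a meet with respect to the natural partial order. -/
class BooleanInverseMeetMonoid (S : Type u) extends BooleanInverseMonoid S where
  inf : S → S → S
  inf_le_left : ∀ a b : S, nle (inf a b) a
  inf_le_right : ∀ a b : S, nle (inf a b) b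
  le_inf : ∀ a b c : S, nle c a → nle c b → nle c (inf a b)

section MoreDefs

variable {S : Type u}

/-- The join of a compatible pair. -/
def bsup [DistributiveInverseMonoid S] (a b : S) : S := DistributiveInverseMonoid.sup a b

/-- Complementation in the Boolean algebra of idempotents. -/
def bcompl [BooleanInverseMonoid S] (e : S) : S := BooleanInverseMonoid.compl e

/-- The binary meet. -/
def binf [BooleanInverseMeetMonoid S] (a b : S) : S := BooleanInverseMeetMonoid.inf a b

/-- The fixed-point operator `φ(s) = s ∧ 1`. -/
def phi [BooleanInverseMeetMonoid S] (s : S) : S := binf s 1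

/-- The support operator `σ(s) = \overline{φ(s)} ⋅ s⁻¹ s`. -/
def sigma [BooleanInverseMeetMonoid S] (s : S) : S := bcompl (phi s) * (s⁻¹ * s)

/-- An infinitesimal is a non-zero element that squares to zero. -/
def Infinitesimal [InverseMonoidWithZero S] (a : S) : Prop := a ≠ 0 ∧ a * a = 0

/-- A (two-sided) ideal. -/
def IsMIdeal [InverseMonoidWithZero S] (I : Set S) : Prop :=
  I.Nonempty ∧ ∀ a ∈ I, ∀ s : S, s * a ∈ I ∧ a * s ∈ I

/-- A ∨-ideal: an ideal closed under joins of compatible pairs. -/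
def IsVIdeal [DistributiveInverseMonoid S] (I : Set S) : Prop :=
  IsMIdeal I ∧ ∀ a ∈ I, ∀ b ∈ I, Compat a b → bsup a b ∈ I

end MoreDefs

/-- 0-simplifying: the only ∨-ideals are `{0}` and `S`. -/
def ZeroSimplifying (S : Type u) [DistributiveInverseMonoid S] : Prop :=
  ∀ I : Set S, IsVIdeal I → I = {0} ∨ I = Set.univ

/-- 0-simple: non-trivial and the only ideals are `{0}` and `S`. -/
def ZeroSimple (S : Type u) [InverseMonoidWithZero S] : Prop :=
  (∃ s : S, s ≠ 0) ∧ ∀ I : Set S, IsMIdeal I → I = {0} ∨ I = Set.univ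

/-- Fundamental: every element commuting with all idempotents is an idempotent. -/
def Fundamental (S : Type u) [InverseMonoidWithZero S] : Prop :=
  ∀ a : S, (∀ e : S, e * e = e → a * e = e * a) → a * a = a

/-- The Boolean algebra of idempotents is atomless. -/
def IdemAtomless (S : Type u) [InverseMonoidWithZero S] : Prop :=
  ∀ e : S, e * e = e → e ≠ 0 → ∃ f : S, f * f = f ∧ f ≠ 0 ∧ nle f e ∧ f ≠ e

section Filters

variable {S : Type u}

/-- A filter in a Boolean inverse ∧-monoid: a nonempty subset closed under
binary meets and upward closed in the natural partial order. -/
def IsMFilter [BooleanInverseMeetMonoid S] (A : Set S) : Prop :=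
  A.Nonempty ∧ (∀ a ∈ A, ∀ b ∈ A, binf a b ∈ A) ∧ ∀ a ∈ A, ∀ b : S, nle a b → b ∈ A

/-- An ultrafilter: a maximal proper filter. -/
def IsMUltrafilter [BooleanInverseMeetMonoid S] (A : Set S) : Prop :=
  IsMFilter A ∧ (0 : S) ∉ A ∧ ∀ B : Set S, IsMFilter B → (0 : S) ∉ B → A ⊆ B → A = B

/-- A filter of the Boolean algebra of idempotents (meet of idempotents is
their product). -/
def IsIdemFilter [InverseMonoidWithZero S] (F : Set S) : Prop :=
  F.Nonempty ∧ (∀ e ∈ F, e * e = e) ∧ (∀ e ∈ F, ∀ f ∈ F, e * f ∈ F) ∧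
    ∀ e ∈ F, ∀ f : S, f * f = f → nle e f → f ∈ F

/-- An ultrafilter of the Boolean algebra of idempotents. -/
def IsIdemUltrafilter [InverseMonoidWithZero S] (F : Set S) : Prop :=
  IsIdemFilter F ∧ (0 : S) ∉ F ∧
    ∀ G : Set S, IsIdemFilter G → (0 : S) ∉ G → F ⊆ G → F = G

end Filters

section PencilDefs

variable {S : Type u}

/-- `Preceq e f`: there is a pencil from `e` to `f`, i.e. finitely many
elements `x₁, …, xₘ` with `r(xᵢ) ≤ f` for all `i` and `e = ⋁ d(xᵢ)`
(a least upper bound for the natural partial order). -/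
def Preceq [DistributiveInverseMonoid S] (e f : S) : Prop :=
  ∃ l : List S, l ≠ [] ∧ (∀ x ∈ l, nle (x * x⁻¹) f) ∧
    (∀ x ∈ l, nle (x⁻¹ * x) e) ∧ ∀ c : S, (∀ x ∈ l, nle (x⁻¹ * x) c) → nle e c

/-- Piecewise factorizable: every element is a finite join of elements each of
which lies beneath a unit. -/
def PiecewiseFactorizable (S : Type u) [DistributiveInverseMonoid S] : Prop :=
  ∀ s : S, ∃ l : List S, l ≠ [] ∧ (∀ x ∈ l, ∃ g : S, IsUnit g ∧ nle x g) ∧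
    (∀ x ∈ l, nle x s) ∧ ∀ c : S, (∀ x ∈ l, nle x c) → nle s c

/-- A properly infinite idempotent. -/
def ProperlyInfinite [DistributiveInverseMonoid S] (e : S) : Prop :=
  ∃ x y : S, x⁻¹ * x = e ∧ y⁻¹ * y = e ∧ Orth (x * x⁻¹) (y * y⁻¹) ∧
    nle (bsup (x * x⁻¹) (y * y⁻¹)) e

end PencilDefs

/-- Purely infinite: every non-zero idempotent is properly infinite. -/
def PurelyInfinite (S : Type u) [DistributiveInverseMonoid S] : Prop :=
  ∀ e : S, e * e = e → e ≠ 0 → ProperlyInfinite e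

/-!
Idempotents of an inverse monoid commute, which yields `(ab)⁻¹ = b⁻¹a⁻¹` and makes the natural
order a partial order preserved by inversion. If `s⁻¹s = ss⁻¹ = e`, then `s` and `s⁻¹` are
orthogonal to `ē`, so by distributivity `(s ∨ ē)(s⁻¹ ∨ ē) = ss⁻¹ ∨ ē = 1`. If `a² = 0`, then
`b = a⁻¹ ∨ a` is self-inverse with `b² = a⁻¹a ∨ aa⁻¹`, so the same computation gives `u² = 1` for
`u = b ∨ ē`; and `u = 1` would force `a ≤ 1`, i.e. `a = a² = 0`.
-/

namespace InverseMonoidWithZero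

variable {S : Type u} [InverseMonoidWithZero S]

theorem inv_inv (a : S) : a⁻¹⁻¹ = a :=
  (inv_unique _ _ (inv_mul_inv a) (mul_inv_mul a)).symm

theorem inv_zero : (0 : S)⁻¹ = 0 :=
  (inv_unique _ _ (by rw [mul_zero']) (by rw [mul_zero'])).symm

theorem inv_eq_self_of_isIdempotentElem {e : S} (he : IsIdempotentElem e) : e⁻¹ = e :=
  (inv_unique e e (by rw [he.eq, he.eq]) (by rw [he.eq, he.eq])).symm

theorem isIdempotentElem_inv_mul (a : S) : IsIdempotentElem (a⁻¹ * a) := by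
  rw [IsIdempotentElem, ← mul_assoc, inv_mul_inv]

theorem isIdempotentElem_mul_inv (a : S) : IsIdempotentElem (a * a⁻¹) := by
  rw [IsIdempotentElem, ← mul_assoc, mul_inv_mul]

theorem mul_inv_mul_assoc (a b : S) : a * (a⁻¹ * (a * b)) = a * b := by
  rw [← mul_assoc, ← mul_assoc, mul_inv_mul]

theorem inv_mul_inv_assoc (a b : S) : a⁻¹ * (a * (a⁻¹ * b)) = a⁻¹ * b := by
  rw [← mul_assoc, ← mul_assoc, inv_mul_inv]

theorem mul_mul_self_of_isIdempotentElem {e : S} (he : IsIdempotentElem e) (x : S) :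
    e * (e * x) = e * x := by
  rw [← mul_assoc, he.eq]

/-- With `x = (ef)⁻¹`, the element `f x e` is again an inverse of `ef`, so `x = f x e`; this
makes `x` idempotent, hence self-inverse, and `ef = x⁻¹`. -/
theorem isIdempotentElem_mul {e f : S} (he : IsIdempotentElem e) (hf : IsIdempotentElem f) :
    IsIdempotentElem (e * f) := by
  have hx (y : S) : (e * f)⁻¹ * (e * (f * ((e * f)⁻¹ * y))) = (e * f)⁻¹ * y := by
    simpa only [mul_assoc] using inv_mul_inv_assoc (e * f) y
  have hfxe : f * (e * f)⁻¹ * e = (e * f)⁻¹ := by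
    refine inv_unique _ _ ?_ ?_
    · simpa only [mul_assoc, mul_mul_self_of_isIdempotentElem he,
        mul_mul_self_of_isIdempotentElem hf] using mul_inv_mul (e * f)
    · simp only [mul_assoc, mul_mul_self_of_isIdempotentElem he,
        mul_mul_self_of_isIdempotentElem hf, hx]
  have hxx : IsIdempotentElem (e * f)⁻¹ := by
    rw [IsIdempotentElem, ← hfxe]
    simp only [mul_assoc, hx]
  rw [← inv_inv (e * f), inv_eq_self_of_isIdempotentElem hxx]
  exact hxx

theorem commute_of_isIdempotentElem {e f : S} (he : IsIdempotentElem e)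
    (hf : IsIdempotentElem f) : Commute e f := by
  have hef := isIdempotentElem_mul he hf
  have h : f * e = (e * f)⁻¹ := by
    refine inv_unique _ _ ?_ ?_
    · simpa only [IsIdempotentElem, mul_assoc, mul_mul_self_of_isIdempotentElem he,
        mul_mul_self_of_isIdempotentElem hf] using hef
    · simpa only [IsIdempotentElem, mul_assoc, mul_mul_self_of_isIdempotentElem he,
        mul_mul_self_of_isIdempotentElem hf] using isIdempotentElem_mul hf he
  rw [Commute, SemiconjBy, h, inv_eq_self_of_isIdempotentElem hef]

theorem mul_inv_rev (a b : S) : (a * b)⁻¹ = b⁻¹ * a⁻¹ := by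
  have hc := commute_of_isIdempotentElem (isIdempotentElem_mul_inv b) (isIdempotentElem_inv_mul a)
  refine (inv_unique _ _ ?_ ?_).symm
  · calc a * b * (b⁻¹ * a⁻¹) * (a * b) = a * ((b * b⁻¹) * ((a⁻¹ * a) * b)) := by
          simp only [mul_assoc]
      _ = a * b := by rw [hc.left_comm]; simp only [← mul_assoc, mul_inv_mul]
  · calc b⁻¹ * a⁻¹ * (a * b) * (b⁻¹ * a⁻¹) = b⁻¹ * ((a⁻¹ * a) * ((b * b⁻¹) * a⁻¹)) := by
          simp only [mul_assoc]
      _ = b⁻¹ * a⁻¹ := by rw [hc.symm.left_comm]; simp only [← mul_assoc, inv_mul_inv]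

theorem nle_refl (a : S) : nle a a := ⟨1, one_mul 1, (one_mul a).symm⟩

theorem zero_nle (a : S) : nle 0 a := ⟨0, zero_mul' 0, (zero_mul' a).symm⟩

theorem nle_trans {a b c : S} : nle a b → nle b c → nle a c
  | ⟨e, he, hab⟩, ⟨f, hf, hbc⟩ => ⟨e * f, isIdempotentElem_mul he hf, by rw [hab, hbc, mul_assoc]⟩

theorem nle_antisymm {a b : S} : nle a b → nle b a → a = b
  | ⟨e, he, hab⟩, ⟨f, hf, hba⟩ =>
    calc a = e * b := hab
      _ = e * (f * a) := by rw [← hba]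
      _ = f * (e * a) := (commute_of_isIdempotentElem he hf).left_comm a
      _ = f * a := by rw [hab, mul_mul_self_of_isIdempotentElem he]
      _ = b := hba.symm

/-- The witness is the conjugate `b f b⁻¹`, which is idempotent because `f` commutes with
`b⁻¹ b`. -/
theorem nle_of_eq_mul {a b f : S} (hf : IsIdempotentElem f) (h : a = b * f) : nle a b := by
  have hc := commute_of_isIdempotentElem hf (isIdempotentElem_inv_mul b)
  refine ⟨b * f * b⁻¹, ?_, ?_⟩
  · calc b * f * b⁻¹ * (b * f * b⁻¹) = b * (f * (b⁻¹ * b * (f * b⁻¹))) := by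
          simp only [mul_assoc]
      _ = b * (b⁻¹ * b * (f * (f * b⁻¹))) := by rw [hc.left_comm]
      _ = b * f * b⁻¹ := by
          rw [mul_mul_self_of_isIdempotentElem hf, mul_assoc b⁻¹, mul_inv_mul_assoc, mul_assoc]
  · calc a = b * f := h
      _ = b * (b⁻¹ * b * f) := by rw [← mul_assoc, ← mul_assoc, mul_inv_mul]
      _ = b * f * b⁻¹ * b := by rw [← hc.eq]; simp only [mul_assoc]

theorem nle_inv {a b : S} : nle a b → nle a⁻¹ b⁻¹
  | ⟨e, he, h⟩ => nle_of_eq_mul he (by rw [h, mul_inv_rev, inv_eq_self_of_isIdempotentElem he])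

theorem nle_inv_iff {a b : S} : nle a b⁻¹ ↔ nle a⁻¹ b :=
  ⟨fun h => by simpa only [inv_inv] using nle_inv h,
    fun h => by simpa only [inv_inv] using nle_inv h⟩

theorem isIdempotentElem_of_nle_one {a : S} : nle a 1 → IsIdempotentElem a
  | ⟨e, he, h⟩ => by rwa [h, mul_one]

theorem _root_.Orth.compat {a b : S} (h : Orth a b) : Compat a b :=
  ⟨by rw [h.1, zero_mul'], by rw [h.2, zero_mul']⟩

theorem _root_.Compat.symm {a b : S} (h : Compat a b) : Compat b a := by
  have h₁ : b * a⁻¹ = a * b⁻¹ := by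
    rw [← inv_eq_self_of_isIdempotentElem h.1, mul_inv_rev, inv_inv]
  have h₂ : b⁻¹ * a = a⁻¹ * b := by
    rw [← inv_eq_self_of_isIdempotentElem h.2, mul_inv_rev, inv_inv]
  rw [Compat, h₁, h₂]
  exact h

theorem _root_.Compat.inv {a b : S} (h : Compat a b) : Compat a⁻¹ b⁻¹ := by
  rw [Compat, inv_inv, inv_inv]
  exact ⟨h.2, h.1⟩

theorem compat_zero (a : S) : Compat a 0 :=
  Orth.compat ⟨by rw [inv_zero, mul_zero'], mul_zero' _⟩

theorem mul_self_eq_zero_iff_orth_inv_mul_mul_inv (a : S) :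
    a * a = 0 ↔ Orth (a⁻¹ * a) (a * a⁻¹) := by
  rw [Orth, inv_eq_self_of_isIdempotentElem (isIdempotentElem_mul_inv a),
    inv_eq_self_of_isIdempotentElem (isIdempotentElem_inv_mul a), and_self]
  constructor
  · intro h
    calc a⁻¹ * a * (a * a⁻¹) = a⁻¹ * (a * a) * a⁻¹ := by simp only [mul_assoc]
      _ = 0 := by rw [h, mul_zero', zero_mul']
  · intro h
    calc a * a = a * a⁻¹ * a * (a * a⁻¹ * a) := by rw [mul_inv_mul]
      _ = a * (a⁻¹ * a * (a * a⁻¹)) * a := by simp only [mul_assoc]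
      _ = 0 := by rw [h, mul_zero', zero_mul']

theorem mul_self_eq_zero_iff_orth_inv (a : S) : a * a = 0 ↔ Orth a a⁻¹ := by
  rw [Orth, inv_inv, ← mul_inv_rev]
  exact ⟨fun h => ⟨h, by rw [h, inv_zero]⟩, And.left⟩

section Distributive

variable {S : Type u} [DistributiveInverseMonoid S]

theorem le_bsup_left {a b : S} (h : Compat a b) : nle a (bsup a b) :=
  DistributiveInverseMonoid.le_sup_left a b h

theorem le_bsup_right {a b : S} (h : Compat a b) : nle b (bsup a b) :=
  DistributiveInverseMonoid.le_sup_right a b h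

theorem bsup_le {a b c : S} (h : Compat a b) : nle a c → nle b c → nle (bsup a b) c :=
  DistributiveInverseMonoid.sup_le a b c h

theorem mul_bsup {a b : S} (c : S) (h : Compat a b) : c * bsup a b = bsup (c * a) (c * b) :=
  DistributiveInverseMonoid.mul_sup a b c h

theorem bsup_mul {a b : S} (c : S) (h : Compat a b) : bsup a b * c = bsup (a * c) (b * c) :=
  DistributiveInverseMonoid.sup_mul a b c h

theorem bsup_zero (a : S) : bsup a 0 = a :=
  nle_antisymm (bsup_le (compat_zero a) (nle_refl a) (zero_nle a)) (le_bsup_left (compat_zero a))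

theorem zero_bsup (a : S) : bsup 0 a = a :=
  nle_antisymm (bsup_le (compat_zero a).symm (zero_nle a) (nle_refl a))
    (le_bsup_right (compat_zero a).symm)

theorem bsup_comm {a b : S} (h : Compat a b) : bsup a b = bsup b a :=
  nle_antisymm (bsup_le h (le_bsup_right h.symm) (le_bsup_left h.symm))
    (bsup_le h.symm (le_bsup_right h) (le_bsup_left h))

theorem inv_bsup {a b : S} (h : Compat a b) : (bsup a b)⁻¹ = bsup a⁻¹ b⁻¹ :=
  nle_antisymm
    (nle_inv_iff.1 (bsup_le h (nle_inv_iff.2 (le_bsup_left h.inv))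
      (nle_inv_iff.2 (le_bsup_right h.inv))))
    (bsup_le h.inv (nle_inv (le_bsup_left h)) (nle_inv (le_bsup_right h)))

end Distributive

section Boolean

variable {S : Type u} [BooleanInverseMonoid S]

theorem isIdempotentElem_bcompl {e : S} (he : IsIdempotentElem e) :
    IsIdempotentElem (bcompl e) :=
  BooleanInverseMonoid.compl_idem e he

theorem mul_bcompl {e : S} (he : IsIdempotentElem e) : e * bcompl e = 0 :=
  BooleanInverseMonoid.mul_compl e he

theorem bsup_bcompl {e : S} (he : IsIdempotentElem e) : bsup e (bcompl e) = 1 :=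
  BooleanInverseMonoid.sup_compl e he

theorem mul_bcompl_eq_zero {e x : S} (he : IsIdempotentElem e) (h : x * e = x) :
    x * bcompl e = 0 := by
  rw [← h, mul_assoc, mul_bcompl he, mul_zero']

theorem bcompl_mul_eq_zero {e x : S} (he : IsIdempotentElem e) (h : e * x = x) :
    bcompl e * x = 0 := by
  rw [← h, ← mul_assoc, ← (commute_of_isIdempotentElem he (isIdempotentElem_bcompl he)).eq,
    mul_bcompl he, zero_mul']

theorem orth_bcompl {s e : S} (hs₁ : s⁻¹ * s = e) (hs₂ : s * s⁻¹ = e) : Orth s (bcompl e) := by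
  have he : IsIdempotentElem e := hs₁ ▸ isIdempotentElem_inv_mul s
  rw [Orth, inv_eq_self_of_isIdempotentElem (isIdempotentElem_bcompl he)]
  exact ⟨mul_bcompl_eq_zero he (by rw [← hs₁, ← mul_assoc, mul_inv_mul]),
    mul_bcompl_eq_zero he (by rw [← hs₂, ← mul_assoc, inv_mul_inv])⟩

theorem bsup_bcompl_mul_bsup_inv_bcompl {s e : S} (hs₁ : s⁻¹ * s = e) (hs₂ : s * s⁻¹ = e) :
    bsup s (bcompl e) * bsup s⁻¹ (bcompl e) = 1 := by
  have he : IsIdempotentElem e := hs₁ ▸ isIdempotentElem_inv_mul s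
  have hs : Compat s (bcompl e) := (orth_bcompl hs₁ hs₂).compat
  have hs' : Compat s⁻¹ (bcompl e) :=
    (orth_bcompl (s := s⁻¹) (by rwa [inv_inv]) (by rwa [inv_inv])).compat
  have h₁ : s * bcompl e = 0 :=
    mul_bcompl_eq_zero he (by rw [← hs₁, ← mul_assoc, mul_inv_mul])
  have h₂ : bcompl e * s⁻¹ = 0 :=
    bcompl_mul_eq_zero he (by rw [← hs₁, inv_mul_inv])
  calc bsup s (bcompl e) * bsup s⁻¹ (bcompl e)
      = bsup (bsup (s * s⁻¹) (s * bcompl e)) (bsup (bcompl e * s⁻¹) (bcompl e * bcompl e)) := by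
        rw [bsup_mul _ hs, mul_bsup _ hs', mul_bsup _ hs']
    _ = 1 := by
        rw [hs₂, h₁, h₂, (isIdempotentElem_bcompl he).eq, bsup_zero, zero_bsup, bsup_bcompl he]

theorem isUnit_bsup_bcompl {s e : S} (hs₁ : s⁻¹ * s = e) (hs₂ : s * s⁻¹ = e) :
    IsUnit (bsup s (bcompl e)) := by
  have h := bsup_bcompl_mul_bsup_inv_bcompl (s := s⁻¹) (e := e) (by rwa [inv_inv])
    (by rwa [inv_inv])
  rw [inv_inv] at h
  exact ⟨⟨_, _, bsup_bcompl_mul_bsup_inv_bcompl hs₁ hs₂, h⟩, rfl⟩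

end Boolean

section Infinitesimal

variable {S : Type u} [BooleanInverseMonoid S] {a : S}

theorem compat_inv_self_of_mul_self_eq_zero (ha : a * a = 0) : Compat a⁻¹ a := by
  obtain ⟨h₁, h₂⟩ := (mul_self_eq_zero_iff_orth_inv a).1 ha
  exact Orth.compat ⟨h₂, by rwa [inv_inv]⟩

theorem bsup_inv_self_mul_self (ha : a * a = 0) :
    bsup a⁻¹ a * bsup a⁻¹ a = bsup (a⁻¹ * a) (a * a⁻¹) := by
  have hc := compat_inv_self_of_mul_self_eq_zero ha
  rw [bsup_mul _ hc, mul_bsup _ hc, mul_bsup _ hc, ha,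
    (mul_self_eq_zero_iff_orth_inv a).1 ha |>.2, zero_bsup, bsup_zero]

theorem inv_bsup_inv_self (ha : a * a = 0) : (bsup a⁻¹ a)⁻¹ = bsup a⁻¹ a := by
  have hc := compat_inv_self_of_mul_self_eq_zero ha
  rw [inv_bsup hc, inv_inv, bsup_comm hc.symm]

end Infinitesimal

end InverseMonoidWithZero

open InverseMonoidWithZero

/-- In a Boolean inverse ∧-monoid:
(1) if `s⁻¹s = ss⁻¹ = e` then `s ∨ ē` is a unit;
(2) `a² = 0` iff `a⁻¹a ⊥ aa⁻¹` iff `a ⊥ a⁻¹`;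
(3) if `a² = 0` and `a ≠ 0`, and `e` is the complement of `a⁻¹a ∨ aa⁻¹`, then
`u = a⁻¹ ∨ a ∨ e` is a non-trivial involution lying above `a`. -/
theorem statement6 (S : Type u) [BooleanInverseMeetMonoid S] :
    (∀ s e : S, s⁻¹ * s = e → s * s⁻¹ = e → IsUnit (bsup s (bcompl e))) ∧
    (∀ a : S, (a * a = 0 ↔ Orth (a⁻¹ * a) (a * a⁻¹)) ∧
      (a * a = 0 ↔ Orth a a⁻¹)) ∧
    (∀ a e : S, a * a = 0 → a ≠ 0 → e = bcompl (bsup (a⁻¹ * a) (a * a⁻¹)) →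
      bsup (bsup a⁻¹ a) e * bsup (bsup a⁻¹ a) e = 1 ∧
      bsup (bsup a⁻¹ a) e ≠ 1 ∧ nle a (bsup (bsup a⁻¹ a) e)) := by
  refine ⟨fun s e => isUnit_bsup_bcompl,
    fun a => ⟨mul_self_eq_zero_iff_orth_inv_mul_mul_inv a, mul_self_eq_zero_iff_orth_inv a⟩, ?_⟩
  rintro a e ha ha₀ rfl
  have hb₁ : (bsup a⁻¹ a)⁻¹ * bsup a⁻¹ a = bsup (a⁻¹ * a) (a * a⁻¹) := by
    rw [inv_bsup_inv_self ha, bsup_inv_self_mul_self ha]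
  have hb₂ : bsup a⁻¹ a * (bsup a⁻¹ a)⁻¹ = bsup (a⁻¹ * a) (a * a⁻¹) := by
    rw [inv_bsup_inv_self ha, bsup_inv_self_mul_self ha]
  have hu := bsup_bcompl_mul_bsup_inv_bcompl hb₁ hb₂
  rw [inv_bsup_inv_self ha] at hu
  have hau : nle a (bsup (bsup a⁻¹ a) (bcompl (bsup (a⁻¹ * a) (a * a⁻¹)))) :=
    nle_trans (le_bsup_right (compat_inv_self_of_mul_self_eq_zero ha))
      (le_bsup_left (orth_bcompl hb₁ hb₂).compat)
  refine ⟨hu, fun hu₁ => ha₀ ?_, hau⟩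
  rw [hu₁] at hau
  exact (isIdempotentElem_of_nle_one hau).eq.symm.trans ha
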